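/- arXiv:1810.02008 — 3 statements merged into one kernel-verified Lean document; each statement's English description precedes it below -/
import Mathlib

section
/- The integral ∫₀^∞ s·K₀(s)² ds equals 1/2. -/
open MeasureTheory Real

/-- The modified Bessel function of the second kind of order zero,
`K₀(x) = ∫₀^∞ exp(−x cosh t) dt`. -/
noncomputable def K0 (x : ℝ) : ℝ := ∫ t in Set.Ioi (0 : ℝ), Real.exp (-x * Real.cosh t)

open Set Filter


lemma lt_cosh {t : ℝ} (ht : 0 < t) : t < Real.cosh t :=
  lt_trans (Real.self_lt_sinh_iff.2 ht) (Real.sinh_lt_cosh t)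

lemma expInt {s : ℝ} (hs : 0 < s) :
    IntegrableOn (fun t => Real.exp (-s * Real.cosh t)) (Ioi 0) := by
  have h := exp_neg_integrableOn_Ioi 0 hs
  refine h.mono' ?_ ?_
  · exact (Continuous.measurable (by continuity)).aestronglyMeasurable
  · filter_upwards [ae_restrict_mem measurableSet_Ioi] with t ht
    rw [Real.norm_eq_abs, abs_of_pos (Real.exp_pos _)]
    apply Real.exp_le_exp.2
    have := lt_cosh ht
    nlinarith [hs.le]

lemma K0_nonneg (s : ℝ) : 0 ≤ K0 s :=
  integral_nonneg fun t => (Real.exp_pos _).le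

lemma K0_lintegral {s : ℝ} (hs : 0 < s) :
    ENNReal.ofReal (K0 s) = ∫⁻ t in Ioi 0, ENNReal.ofReal (Real.exp (-s * Real.cosh t)) := by
  exact ofReal_integral_eq_lintegral_ofReal (expInt hs)
    (Filter.Eventually.of_forall fun t => (Real.exp_pos _).le)

lemma sInt_real {a : ℝ} (ha : 0 < a) :
    ∫ s in Ioi (0:ℝ), s * Real.exp (-(a * s)) = (a ^ 2)⁻¹ := by
  have h := integral_rpow_mul_exp_neg_mul_Ioi (by norm_num : (0:ℝ) < 2) ha
  rw [Real.Gamma_two, mul_one] at h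
  have h2 : ∫ s in Ioi (0:ℝ), s * Real.exp (-(a * s))
      = ∫ s in Ioi (0:ℝ), s ^ ((2:ℝ) - 1) * Real.exp (-(a * s)) :=
    setIntegral_congr_fun measurableSet_Ioi
      (fun s _ => by rw [show (2:ℝ) - 1 = 1 by norm_num, Real.rpow_one])
  rw [h2, h, show (2:ℝ) = ((2:ℕ):ℝ) by norm_num, Real.rpow_natCast]
  field_simp

lemma sInt_integrable {a : ℝ} (ha : 0 < a) :
    IntegrableOn (fun s => s * Real.exp (-(a * s))) (Ioi (0:ℝ)) := by
  have h := integrableOn_rpow_mul_exp_neg_mul_rpow (by norm_num : (-1:ℝ) < 1)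
    (by norm_num : (0:ℝ) < 1) ha
  refine h.congr_fun (fun s hs => ?_) measurableSet_Ioi
  beta_reduce; rw [show s ^ (1:ℝ) = s from Real.rpow_one s]; ring_nf

lemma sInt {a : ℝ} (ha : 0 < a) :
    ∫⁻ s in Ioi (0:ℝ), ENNReal.ofReal (s * Real.exp (-(a * s)))
      = ENNReal.ofReal ((a ^ 2)⁻¹) := by
  rw [← sInt_real ha]
  refine (ofReal_integral_eq_lintegral_ofReal (sInt_integrable ha) ?_).symm
  filter_upwards [ae_restrict_mem measurableSet_Ioi] with s hs
  exact mul_nonneg (le_of_lt hs) (Real.exp_pos _).le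

lemma hasDerivAt_tanh (x : ℝ) : HasDerivAt Real.tanh ((Real.cosh x ^ 2)⁻¹) x := by
  have h : HasDerivAt (fun y => Real.sinh y / Real.cosh y)
      ((Real.cosh x * Real.cosh x - Real.sinh x * Real.sinh x) / Real.cosh x ^ 2) x :=
    (Real.hasDerivAt_sinh x).div (Real.hasDerivAt_cosh x) (ne_of_gt (Real.cosh_pos x))
  have h2 : (Real.cosh x * Real.cosh x - Real.sinh x * Real.sinh x) / Real.cosh x ^ 2
      = (Real.cosh x ^ 2)⁻¹ := by
    rw [show Real.cosh x * Real.cosh x - Real.sinh x * Real.sinh x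
        = Real.cosh x ^ 2 - Real.sinh x ^ 2 by ring, Real.cosh_sq_sub_sinh_sq]
    exact one_div _
  rw [show Real.tanh = fun y => Real.sinh y / Real.cosh y
    from funext Real.tanh_eq_sinh_div_cosh, ← h2]
  exact h

lemma tanh_lt_one (x : ℝ) : Real.tanh x < 1 := by
  rw [Real.tanh_eq_sinh_div_cosh, div_lt_one (Real.cosh_pos x)]
  exact Real.sinh_lt_cosh x

lemma tendsto_tanh_atTop : Tendsto Real.tanh atTop (nhds 1) := by
  have key : ∀ x : ℝ, Real.tanh x = (1 - Real.exp (-2 * x)) / (1 + Real.exp (-2 * x)) := by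
    intro x
    rw [Real.tanh_eq_sinh_div_cosh, Real.sinh_eq, Real.cosh_eq]
    have h1 : Real.exp x ≠ 0 := Real.exp_ne_zero x
    have h2 : Real.exp (-2 * x) = Real.exp (-x) * Real.exp (-x) := by
      rw [← Real.exp_add]; ring_nf
    have h3 : Real.exp x * Real.exp (-x) = 1 := by
      rw [← Real.exp_add]; simp
    have h4 : (0:ℝ) < 1 + Real.exp (-2 * x) := by positivity
    have h5 : Real.exp x * Real.exp (-(2 * x)) = Real.exp (-x) := by
      rw [← Real.exp_add]; ring_nf
    field_simp
    rw [mul_comm x 2]; linear_combination (2:ℝ) * h5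
  rw [show (1:ℝ) = (1 - 0) / (1 + 0) by norm_num]
  refine Tendsto.congr (fun x => (key x).symm) ?_
  have he : Tendsto (fun x : ℝ => Real.exp (-2 * x)) atTop (nhds 0) := by
    refine Real.tendsto_exp_atBot.comp ?_
    exact Tendsto.const_mul_atTop_of_neg (by norm_num) tendsto_id
  exact ((tendsto_const_nhds.sub he).div (tendsto_const_nhds.add he) (by norm_num))


lemma coshInt_real (b : ℝ) :
    ∫ p in Ioi b, (Real.cosh p ^ 2)⁻¹ = 1 - Real.tanh b :=
  integral_Ioi_of_hasDerivAt_of_nonneg' (fun x _ => hasDerivAt_tanh x)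
    (fun x _ => by positivity) tendsto_tanh_atTop

lemma coshInt_integrable (b : ℝ) :
    IntegrableOn (fun p => (Real.cosh p ^ 2)⁻¹) (Ioi b) :=
  integrableOn_Ioi_deriv_of_nonneg' (fun x _ => hasDerivAt_tanh x)
    (fun x _ => by positivity) tendsto_tanh_atTop

lemma coshInt (b : ℝ) :
    ∫⁻ p in Ioi b, ENNReal.ofReal ((Real.cosh p ^ 2)⁻¹)
      = ENNReal.ofReal (1 - Real.tanh b) := by
  rw [← coshInt_real b]
  exact (ofReal_integral_eq_lintegral_ofReal (coshInt_integrable b)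
    (Filter.Eventually.of_forall fun p => by positivity)).symm

lemma qInt_real :
    ∫ q in Ioi (0:ℝ), (Real.cosh q ^ 2)⁻¹ * (1 - Real.tanh q) = 1/2 := by
  have hderiv : ∀ x : ℝ, HasDerivAt (fun y => Real.tanh y - Real.tanh y ^ 2 / 2)
      ((Real.cosh x ^ 2)⁻¹ * (1 - Real.tanh x)) x := by
    intro x
    have h1 := hasDerivAt_tanh x
    have h2 : HasDerivAt (fun y => Real.tanh y ^ 2 / 2)
        (2 * Real.tanh x ^ (2-1) * (Real.cosh x ^ 2)⁻¹ / 2) x := (h1.pow 2).div_const 2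
    have := h1.sub h2
    refine this.congr_deriv ?_
    ring
  have hnn : ∀ x : ℝ, x ∈ Ioi (0:ℝ) → 0 ≤ (Real.cosh x ^ 2)⁻¹ * (1 - Real.tanh x) :=
    fun x _ => mul_nonneg (by positivity) (by linarith [_root_.tanh_lt_one x])
  have hlim : Tendsto (fun y => Real.tanh y - Real.tanh y ^ 2 / 2) atTop (nhds (1/2)) := by
    have := tendsto_tanh_atTop.sub ((tendsto_tanh_atTop.pow 2).div_const 2)
    norm_num at this
    convert this using 2
  have := integral_Ioi_of_hasDerivAt_of_nonneg' (fun x _ => hderiv x) hnn hlim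
  rw [this, Real.tanh_zero]
  norm_num

lemma qInt_integrable :
    IntegrableOn (fun q => (Real.cosh q ^ 2)⁻¹ * (1 - Real.tanh q)) (Ioi (0:ℝ)) := by
  have hderiv : ∀ x : ℝ, HasDerivAt (fun y => Real.tanh y - Real.tanh y ^ 2 / 2)
      ((Real.cosh x ^ 2)⁻¹ * (1 - Real.tanh x)) x := by
    intro x
    have h1 := hasDerivAt_tanh x
    have h2 : HasDerivAt (fun y => Real.tanh y ^ 2 / 2)
        (2 * Real.tanh x ^ (2-1) * (Real.cosh x ^ 2)⁻¹ / 2) x := (h1.pow 2).div_const 2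
    have := h1.sub h2
    refine this.congr_deriv ?_
    ring
  have hlim : Tendsto (fun y => Real.tanh y - Real.tanh y ^ 2 / 2) atTop (nhds (1/2)) := by
    have := tendsto_tanh_atTop.sub ((tendsto_tanh_atTop.pow 2).div_const 2)
    norm_num at this
    convert this using 2
  exact integrableOn_Ioi_deriv_of_nonneg' (fun x _ => hderiv x)
    (fun x _ => mul_nonneg (by positivity) (by linarith [_root_.tanh_lt_one x])) hlim

lemma qInt :
    ∫⁻ q in Ioi (0:ℝ), ENNReal.ofReal ((Real.cosh q ^ 2)⁻¹ * (1 - Real.tanh q))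
      = ENNReal.ofReal (1/2) := by
  rw [← qInt_real]
  exact (ofReal_integral_eq_lintegral_ofReal qInt_integrable
    (Filter.Eventually.of_forall fun q =>
      mul_nonneg (by positivity) (by linarith [_root_.tanh_lt_one q]))).symm

noncomputable def T : (ℝ × ℝ) →ₗ[ℝ] (ℝ × ℝ) :=
  Matrix.toLin (Module.Basis.finTwoProd ℝ) (Module.Basis.finTwoProd ℝ) !![1, 1; 1, -1]

lemma T_apply (x : ℝ × ℝ) : T x = (x.1 + x.2, x.1 - x.2) := by
  simp [T, Matrix.toLin_finTwoProd_apply]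
  ring

lemma T_det : LinearMap.det T = -2 := by
  rw [T, LinearMap.det_toLin]
  simp [Matrix.det_fin_two_of]
  norm_num

lemma lintegral_T (f : ℝ × ℝ → ENNReal) (hf : Measurable f) :
    ∫⁻ x, f x = 2 * ∫⁻ x, f (T x) := by
  have hdet : LinearMap.det T ≠ 0 := by rw [T_det]; norm_num
  have hmap := Measure.map_linearMap_addHaar_eq_smul_addHaar (volume : Measure (ℝ × ℝ)) hdet
  rw [T_det] at hmap
  have hT : Measurable T := T.continuous_of_finiteDimensional.measurable
  have : ∫⁻ x, f (T x) = ∫⁻ x, f x ∂(Measure.map T volume) := (lintegral_map hf hT).symm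
  rw [this, hmap]
  rw [lintegral_smul_measure, smul_eq_mul]
  rw [show |((-2 : ℝ))⁻¹| = 2⁻¹ by norm_num]
  rw [← mul_assoc, show (2 : ENNReal) * ENNReal.ofReal 2⁻¹ = 1 by
    rw [ENNReal.ofReal_inv_of_pos (by norm_num), ENNReal.ofReal_ofNat]
    exact ENNReal.mul_inv_cancel (by norm_num) (by norm_num)]
  rw [one_mul]




lemma Phi_meas : Measurable fun z : ℝ × ℝ =>
    ENNReal.ofReal (((Real.cosh z.1 + Real.cosh z.2) ^ 2)⁻¹) := by
  apply Measurable.ennreal_ofReal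
  apply Measurable.inv
  apply Measurable.pow_const
  exact ((Real.continuous_cosh.comp continuous_fst).add
    (Real.continuous_cosh.comp continuous_snd)).measurable

lemma Dval : (∫⁻ t in Ioi (0:ℝ), ∫⁻ u in Ioi (0:ℝ),
    ENNReal.ofReal (((Real.cosh t + Real.cosh u) ^ 2)⁻¹)) = ENNReal.ofReal (1/2) := by
  set Φ : ℝ × ℝ → ENNReal :=
    fun z => ENNReal.ofReal (((Real.cosh z.1 + Real.cosh z.2) ^ 2)⁻¹) with hΦ
  -- iterated to product
  have step1 : (∫⁻ t in Ioi (0:ℝ), ∫⁻ u in Ioi (0:ℝ),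
      ENNReal.ofReal (((Real.cosh t + Real.cosh u) ^ 2)⁻¹))
      = ∫⁻ z, ((Ioi (0:ℝ) ×ˢ Ioi (0:ℝ)).indicator Φ) z := by
    rw [lintegral_indicator (measurableSet_Ioi.prod measurableSet_Ioi),
      Measure.volume_eq_prod, ← Measure.prod_restrict,
      lintegral_prod _ Phi_meas.aemeasurable]
  rw [step1]
  rw [lintegral_T _ (Phi_meas.indicator (measurableSet_Ioi.prod measurableSet_Ioi))]
  set Ψ : ℝ × ℝ → ENNReal :=
    fun w => ENNReal.ofReal (((2 * Real.cosh w.1 * Real.cosh w.2) ^ 2)⁻¹) with hΨ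
  set S : Set (ℝ × ℝ) := {w : ℝ × ℝ | |w.2| < w.1} with hS
  have hSmeas : MeasurableSet S :=
    measurableSet_lt (measurable_abs.comp measurable_snd) measurable_fst
  have hΨmeas : Measurable Ψ := by
    apply Measurable.ennreal_ofReal
    apply Measurable.inv
    apply Measurable.pow_const
    exact (((continuous_const.mul (Real.continuous_cosh.comp continuous_fst)).mul
      (Real.continuous_cosh.comp continuous_snd))).measurable
  have step2 : ∀ z : ℝ × ℝ, ((Ioi (0:ℝ) ×ˢ Ioi (0:ℝ)).indicator Φ) (T z)
      = S.indicator Ψ z := by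
    intro z
    rw [T_apply]
    by_cases h : |z.2| < z.1
    · rw [Set.indicator_of_mem (show z ∈ S from h), Set.indicator_of_mem (by
        obtain ⟨h1, h2⟩ := abs_lt.1 h
        simp only [Set.mem_prod, mem_Ioi]
        constructor <;> linarith)]
      simp only [hΦ, hΨ]
      congr 2
      rw [Real.cosh_add, Real.cosh_sub]; ring
    · rw [Set.indicator_of_notMem (show z ∉ S from h), Set.indicator_of_notMem (by
        intro hmem
        simp only [Set.mem_prod, mem_Ioi] at hmem
        obtain ⟨h1, h2⟩ := hmem
        exact h (abs_lt.2 ⟨by linarith, by linarith⟩))]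
  rw [lintegral_congr step2]
  -- now iterated, q outer
  have step3 : (∫⁻ z : ℝ × ℝ, S.indicator Ψ z)
      = ∫⁻ q : ℝ, ∫⁻ p in Ioi |q|, Ψ (p, q) := by
    rw [Measure.volume_eq_prod, lintegral_prod_symm _ (hΨmeas.indicator hSmeas).aemeasurable]
    refine lintegral_congr fun q => ?_
    rw [← lintegral_indicator measurableSet_Ioi]
    refine lintegral_congr fun p => ?_
    simp [Set.indicator_apply, hS, mem_Ioi]
  rw [step3]
  have step4 : ∀ q : ℝ, (∫⁻ p in Ioi |q|, Ψ (p, q))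
      = ENNReal.ofReal ((4 * Real.cosh q ^ 2)⁻¹) * ENNReal.ofReal (1 - Real.tanh |q|) := by
    intro q
    have : ∀ p : ℝ, Ψ (p, q)
        = ENNReal.ofReal ((4 * Real.cosh q ^ 2)⁻¹) * ENNReal.ofReal ((Real.cosh p ^ 2)⁻¹) := by
      intro p
      rw [hΨ, ← ENNReal.ofReal_mul (by positivity)]
      congr 1
      rw [← mul_inv]
      congr 1
      ring
    simp_rw [this]
    rw [lintegral_const_mul' _ _ ENNReal.ofReal_ne_top, coshInt]
  simp_rw [step4]
  -- split ℝ into Ioi 0 and Iic 0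
  have hmeas5 : Measurable fun q : ℝ =>
      ENNReal.ofReal ((4 * Real.cosh q ^ 2)⁻¹) * ENNReal.ofReal (1 - Real.tanh |q|) := by
    apply Measurable.fun_mul
    · exact Measurable.ennreal_ofReal (Measurable.inv
        ((continuous_const.mul (Real.continuous_cosh.pow 2)).measurable))
    · have htanh : Continuous Real.tanh := by
        rw [show Real.tanh = fun x => Real.sinh x / Real.cosh x
          from funext Real.tanh_eq_sinh_div_cosh]
        exact Real.continuous_sinh.div Real.continuous_cosh fun x => (Real.cosh_pos x).ne'
      exact Measurable.ennreal_ofReal ((continuous_const.sub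
        (htanh.comp continuous_abs)).measurable)
  rw [← lintegral_add_compl _ (measurableSet_Ioi (a := (0:ℝ)))]
  have hIic : (∫⁻ q in (Ioi (0:ℝ))ᶜ,
      ENNReal.ofReal ((4 * Real.cosh q ^ 2)⁻¹) * ENNReal.ofReal (1 - Real.tanh |q|))
      = ∫⁻ q in Ioi (0:ℝ),
      ENNReal.ofReal ((4 * Real.cosh q ^ 2)⁻¹) * ENNReal.ofReal (1 - Real.tanh |q|) := by
    rw [compl_Ioi]
    have hres : (volume : Measure ℝ).restrict (Iic 0)
        = Measure.map Neg.neg ((volume : Measure ℝ).restrict (Ici 0)) := by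
      have : (Ici (0:ℝ)) = Neg.neg ⁻¹' (Iic (0:ℝ)) := by
        ext x; simp
      rw [this, ← Measure.restrict_map measurable_neg measurableSet_Iic,
        Measure.map_neg_eq_self (volume : Measure ℝ)]
    rw [hres, lintegral_map hmeas5 measurable_neg, ← restrict_Ioi_eq_restrict_Ici]
    refine lintegral_congr fun q => ?_
    rw [Real.cosh_neg, abs_neg]
  rw [hIic, ← two_mul]
  have step6 : (∫⁻ q in Ioi (0:ℝ),
      ENNReal.ofReal ((4 * Real.cosh q ^ 2)⁻¹) * ENNReal.ofReal (1 - Real.tanh |q|))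
      = ENNReal.ofReal (1/8) := by
    have : ∀ q ∈ Ioi (0:ℝ),
        ENNReal.ofReal ((4 * Real.cosh q ^ 2)⁻¹) * ENNReal.ofReal (1 - Real.tanh |q|)
        = ENNReal.ofReal (4⁻¹) * ENNReal.ofReal ((Real.cosh q ^ 2)⁻¹ * (1 - Real.tanh q)) := by
      intro q hq
      rw [abs_of_pos (mem_Ioi.1 hq), ← ENNReal.ofReal_mul (by positivity),
        ← ENNReal.ofReal_mul (by positivity)]
      congr 1
      rw [mul_inv]
      ring
    rw [setLIntegral_congr_fun measurableSet_Ioi this,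
      lintegral_const_mul' _ _ ENNReal.ofReal_ne_top, qInt,
      ← ENNReal.ofReal_mul (by norm_num)]
    norm_num
  rw [step6]
  rw [show (2:ENNReal) = ENNReal.ofReal 2 from (ENNReal.ofReal_ofNat 2).symm]
  rw [← ENNReal.ofReal_mul (by norm_num), ← ENNReal.ofReal_mul (by norm_num)]
  norm_num


lemma hH_meas : Measurable fun p : (ℝ × ℝ) × ℝ =>
    ENNReal.ofReal p.1.1 * ENNReal.ofReal (Real.exp (-p.1.1 * Real.cosh p.1.2))
      * ENNReal.ofReal (Real.exp (-p.1.1 * Real.cosh p.2)) := by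
  apply Measurable.fun_mul
  · apply Measurable.fun_mul
    · exact Measurable.ennreal_ofReal (measurable_fst.comp measurable_fst)
    · exact Measurable.ennreal_ofReal (by fun_prop)
  · exact Measurable.ennreal_ofReal (by fun_prop)

lemma key : ∫⁻ s in Ioi (0:ℝ), ENNReal.ofReal (s * K0 s ^ 2) = ENNReal.ofReal (1/2) := by
  have e2 : ∀ s ∈ Ioi (0:ℝ), ENNReal.ofReal (s * K0 s ^ 2)
      = ∫⁻ t in Ioi (0:ℝ), ∫⁻ u in Ioi (0:ℝ),
          ENNReal.ofReal s * ENNReal.ofReal (Real.exp (-s * Real.cosh t))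
            * ENNReal.ofReal (Real.exp (-s * Real.cosh u)) := by
    intro s hs
    rw [mem_Ioi] at hs
    have e0 : ENNReal.ofReal (s * K0 s ^ 2)
        = ENNReal.ofReal s * ENNReal.ofReal (K0 s) * ENNReal.ofReal (K0 s) := by
      rw [← ENNReal.ofReal_mul hs.le, ← ENNReal.ofReal_mul (mul_nonneg hs.le (K0_nonneg s))]
      ring_nf
    have e1 : ENNReal.ofReal s * ENNReal.ofReal (K0 s)
        = ∫⁻ t in Ioi (0:ℝ), ENNReal.ofReal s * ENNReal.ofReal (Real.exp (-s * Real.cosh t)) := by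
      rw [K0_lintegral hs, lintegral_const_mul' _ _ ENNReal.ofReal_ne_top]
    rw [e0, e1, ← lintegral_mul_const' _ _ ENNReal.ofReal_ne_top]
    refine lintegral_congr fun t => ?_
    rw [K0_lintegral hs, lintegral_const_mul' _ _
      (ENNReal.mul_ne_top ENNReal.ofReal_ne_top ENNReal.ofReal_ne_top)]
  rw [setLIntegral_congr_fun measurableSet_Ioi e2]
  -- swap s and t
  rw [lintegral_lintegral_swap (Measurable.lintegral_prod_right' hH_meas).aemeasurable]
  -- swap s and u (for each t)
  have swap2 : ∀ t : ℝ, (∫⁻ s in Ioi (0:ℝ), ∫⁻ u in Ioi (0:ℝ),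
      ENNReal.ofReal s * ENNReal.ofReal (Real.exp (-s * Real.cosh t))
        * ENNReal.ofReal (Real.exp (-s * Real.cosh u)))
      = ∫⁻ u in Ioi (0:ℝ), ∫⁻ s in Ioi (0:ℝ),
      ENNReal.ofReal s * ENNReal.ofReal (Real.exp (-s * Real.cosh t))
        * ENNReal.ofReal (Real.exp (-s * Real.cosh u)) := by
    intro t
    refine lintegral_lintegral_swap ?_
    have : Measurable fun p : ℝ × ℝ =>
        ENNReal.ofReal p.1 * ENNReal.ofReal (Real.exp (-p.1 * Real.cosh t))
          * ENNReal.ofReal (Real.exp (-p.1 * Real.cosh p.2)) := by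
      apply Measurable.fun_mul
      · apply Measurable.fun_mul
        · exact Measurable.ennreal_ofReal measurable_fst
        · exact Measurable.ennreal_ofReal (by fun_prop)
      · exact Measurable.ennreal_ofReal (by fun_prop)
    exact this.aemeasurable
  rw [lintegral_congr swap2]
  rw [← Dval]
  refine lintegral_congr fun t => lintegral_congr fun u => ?_
  have ha : 0 < Real.cosh t + Real.cosh u := by positivity
  have hinner : ∀ s ∈ Ioi (0:ℝ),
      ENNReal.ofReal s * ENNReal.ofReal (Real.exp (-s * Real.cosh t))
        * ENNReal.ofReal (Real.exp (-s * Real.cosh u))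
      = ENNReal.ofReal (s * Real.exp (-((Real.cosh t + Real.cosh u) * s))) := by
    intro s hs
    rw [mem_Ioi] at hs
    rw [← ENNReal.ofReal_mul hs.le, ← ENNReal.ofReal_mul (by positivity), mul_assoc,
      ← Real.exp_add]
    congr 2
    ring
  rw [setLIntegral_congr_fun measurableSet_Ioi hinner, sInt ha]

theorem integral_mul_besselK0_sq : ∫ s in Set.Ioi (0 : ℝ), s * (K0 s) ^ 2 = 1 / 2 := by
  have hK0 : StronglyMeasurable K0 := by
    have hc : Continuous fun p : ℝ × ℝ => Real.exp (-p.1 * Real.cosh p.2) := by fun_prop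
    exact hc.stronglyMeasurable.integral_prod_right'
  have hmeas : AEStronglyMeasurable (fun s : ℝ => s * K0 s ^ 2)
      (volume.restrict (Ioi (0:ℝ))) :=
    ((measurable_id.mul ((hK0.measurable.pow_const 2))).aestronglyMeasurable)
  have hnn : 0 ≤ᵐ[volume.restrict (Ioi (0:ℝ))] fun s => s * K0 s ^ 2 := by
    filter_upwards [ae_restrict_mem measurableSet_Ioi] with s hs
    exact mul_nonneg (le_of_lt hs) (sq_nonneg _)
  rw [MeasureTheory.integral_eq_lintegral_of_nonneg_ae hnn hmeas, key,
    ENNReal.toReal_ofReal (by norm_num)]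
end

section
/- The integral ∫₀^∞ s·(ln s)·K₀(s) ds equals ln 2 − γ, where γ is the Euler–Mascheroni constant. -/
open MeasureTheory Real Set Filter Topology

namespace K0Aux

local notation "γ" => Real.eulerMascheroniConstant

/-- Integrability of `x ^ q * exp (-(x * b))` on `(0, ∞)`. -/
lemma intOn_rpow_exp {q b : ℝ} (hq : -1 < q) (hb : 0 < b) :
    IntegrableOn (fun x : ℝ => x ^ q * Real.exp (-(x * b))) (Ioi 0) := by
  have h := integrableOn_rpow_mul_exp_neg_mul_rpow (p := 1) hq one_pos hb
  refine h.congr_fun (fun x _ => ?_) measurableSet_Ioi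
  dsimp only
  rw [Real.rpow_one, neg_mul, mul_comm b x]

lemma abs_log_le {x : ℝ} (hx : 0 < x) : |Real.log x| ≤ x + 2 * x ^ (-(1/2) : ℝ) := by
  have hrp : (0:ℝ) < x ^ (-(1/2) : ℝ) := Real.rpow_pos_of_pos hx _
  rcases le_or_gt 1 x with h1 | h1
  · rw [abs_of_nonneg (Real.log_nonneg h1)]
    have := Real.log_le_sub_one_of_pos hx
    nlinarith
  · have hneg : Real.log x < 0 := Real.log_neg hx h1
    rw [abs_of_neg hneg]
    have hl : Real.log (x ^ (-(1/2) : ℝ)) = -(1/2) * Real.log x := Real.log_rpow hx _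
    have h2 : Real.log (x ^ (-(1/2) : ℝ)) ≤ x ^ (-(1/2) : ℝ) - 1 :=
      Real.log_le_sub_one_of_pos hrp
    rw [hl] at h2
    nlinarith

lemma sLogMul_int {a : ℝ} (ha : 0 < a) :
    IntegrableOn (fun s : ℝ => s * Real.log s * Real.exp (-(s * a))) (Ioi 0) := by
  have h2 : IntegrableOn (fun x : ℝ => x ^ (2:ℝ) * Real.exp (-(x * a))) (Ioi 0) :=
    intOn_rpow_exp (by norm_num) ha
  have hh : IntegrableOn (fun x : ℝ => x ^ ((1:ℝ)/2) * Real.exp (-(x * a))) (Ioi 0) :=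
    intOn_rpow_exp (by norm_num) ha
  have hg : IntegrableOn
      (fun x : ℝ => x ^ (2:ℝ) * Real.exp (-(x * a)) + 2 * (x ^ ((1:ℝ)/2) * Real.exp (-(x * a))))
      (Ioi 0) := h2.add (hh.const_mul 2)
  refine Integrable.mono' hg ?_ ?_
  · apply Measurable.aestronglyMeasurable
    fun_prop
  · rw [ae_restrict_iff' measurableSet_Ioi]
    refine ae_of_all _ fun s hs => ?_
    have hs0 : (0:ℝ) < s := hs
    have hexp : (0:ℝ) < Real.exp (-(s * a)) := Real.exp_pos _
    have hlog := abs_log_le hs0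
    have hmul : s * s ^ (-(1/2) : ℝ) = s ^ ((1:ℝ)/2) := by
      nth_rewrite 1 [← Real.rpow_one s]
      rw [← Real.rpow_add hs0]
      norm_num
    have hsq : s * s = s ^ (2:ℝ) := by
      rw [show (2:ℝ) = 1 + 1 by norm_num, Real.rpow_add hs0, Real.rpow_one]
    have h1 : |s * Real.log s| ≤ s ^ (2:ℝ) + 2 * s ^ ((1:ℝ)/2) := by
      rw [abs_mul, abs_of_pos hs0]
      calc s * |Real.log s| ≤ s * (s + 2 * s ^ (-(1/2) : ℝ)) := by
            exact mul_le_mul_of_nonneg_left hlog hs0.le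
        _ = s * s + 2 * (s * s ^ (-(1/2) : ℝ)) := by ring
        _ = s ^ (2:ℝ) + 2 * s ^ ((1:ℝ)/2) := by rw [hmul, hsq]
    have : ‖s * Real.log s * Real.exp (-(s * a))‖
        = |s * Real.log s| * Real.exp (-(s * a)) := by
      rw [norm_mul, Real.norm_eq_abs, Real.norm_eq_abs, abs_of_pos hexp]
    rw [this]
    calc |s * Real.log s| * Real.exp (-(s * a))
        ≤ (s ^ (2:ℝ) + 2 * s ^ ((1:ℝ)/2)) * Real.exp (-(s * a)) := by
          exact mul_le_mul_of_nonneg_right h1 hexp.le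
      _ = s ^ (2:ℝ) * Real.exp (-(s * a)) + 2 * (s ^ ((1:ℝ)/2) * Real.exp (-(s * a))) := by ring

lemma sMul_int {a : ℝ} (ha : 0 < a) :
    IntegrableOn (fun s : ℝ => s * Real.exp (-(s * a))) (Ioi 0) := by
  have h := intOn_rpow_exp (q := 1) (by norm_num) ha
  refine h.congr_fun (fun x _ => ?_) measurableSet_Ioi
  dsimp only
  rw [Real.rpow_one]

/-- `∫₀^∞ u e^{-u} du = 1`. -/
lemma J0 : ∫ u in Ioi (0:ℝ), u * Real.exp (-u) = 1 := by
  have h := Real.Gamma_eq_integral (by norm_num : (0:ℝ) < 2)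
  rw [Real.Gamma_two] at h
  rw [h]
  refine setIntegral_congr_fun measurableSet_Ioi fun x _ => ?_
  rw [show (2:ℝ) - 1 = 1 by norm_num, Real.rpow_one, mul_comm]

/-- `∫₀^∞ u (log u) e^{-u} du = 1 - γ`. -/
lemma J1 : ∫ u in Ioi (0:ℝ), u * Real.log u * Real.exp (-u) = 1 - γ := by
  have hd1 : HasDerivAt Complex.GammaIntegral
      (∫ t : ℝ in Ioi 0, (t:ℂ) ^ ((2:ℂ) - 1) * (Real.log t * Real.exp (-t))) 2 :=
    Complex.hasDerivAt_GammaIntegral (by norm_num)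
  have hd2 : HasDerivAt Complex.Gamma (1 - (γ:ℂ)) 2 := by
    have h := Complex.hasDerivAt_Gamma_nat 1
    norm_num at h
    convert h using 1
    ring
  have hEv : Complex.GammaIntegral =ᶠ[𝓝 (2:ℂ)] Complex.Gamma := by
    have hop : IsOpen {s : ℂ | 0 < s.re} := isOpen_lt continuous_const Complex.continuous_re
    filter_upwards [hop.mem_nhds (by norm_num : (0:ℝ) < (2:ℂ).re)] with s hs
    exact (Complex.Gamma_eq_integral hs).symm
  have hd2' : HasDerivAt Complex.GammaIntegral (1 - (γ:ℂ)) 2 :=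
    hd2.congr_of_eventuallyEq hEv
  have hEq := hd1.unique hd2'
  have hcong : ∀ t ∈ Ioi (0:ℝ), (t:ℂ) ^ ((2:ℂ) - 1) * (Real.log t * Real.exp (-t))
      = ((t * Real.log t * Real.exp (-t) : ℝ) : ℂ) := by
    intro t _
    rw [show (2:ℂ) - 1 = 1 by norm_num, Complex.cpow_one]
    push_cast
    ring
  rw [setIntegral_congr_fun measurableSet_Ioi hcong] at hEq
  have h2 : (∫ x in Ioi (0:ℝ), ((x * Real.log x * Real.exp (-x) : ℝ) : ℂ))
      = ((∫ x in Ioi (0:ℝ), x * Real.log x * Real.exp (-x) : ℝ) : ℂ) := integral_ofReal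
  rw [h2] at hEq
  exact_mod_cast hEq

/-- `∫₀^∞ s e^{-a s} ds = 1/a²`. -/
lemma B_eq {a : ℝ} (ha : 0 < a) :
    ∫ s in Ioi (0:ℝ), s * Real.exp (-(s * a)) = (a ^ 2)⁻¹ := by
  have h := integral_comp_mul_left_Ioi (fun u : ℝ => u * Real.exp (-u)) 0 ha
  rw [mul_zero, J0, smul_eq_mul, mul_one] at h
  have h2 : ∀ s ∈ Ioi (0:ℝ), a * s * Real.exp (-(a * s))
      = a * (s * Real.exp (-(s * a))) := by
    intro s _
    rw [mul_comm s a]; ring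
  rw [setIntegral_congr_fun measurableSet_Ioi h2, integral_const_mul] at h
  have ha' : a ≠ 0 := ha.ne'
  field_simp at h ⊢
  linarith [h]

/-- Inner integral: `∫₀^∞ s (log s) e^{-a s} ds = (1 - γ - log a)/a²`. -/
lemma inner_eq {a : ℝ} (ha : 1 ≤ a) :
    ∫ s in Ioi (0:ℝ), s * Real.log s * Real.exp (-(s * a))
      = (1 - γ - Real.log a) / a ^ 2 := by
  have ha0 : (0:ℝ) < a := lt_of_lt_of_le one_pos ha
  have h := integral_comp_mul_left_Ioi
    (fun u : ℝ => u * Real.log u * Real.exp (-u)) 0 ha0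
  rw [mul_zero, J1, smul_eq_mul] at h
  have h2 : ∀ s ∈ Ioi (0:ℝ), a * s * Real.log (a * s) * Real.exp (-(a * s))
      = a * (s * Real.log s * Real.exp (-(s * a)))
        + (a * Real.log a) * (s * Real.exp (-(s * a))) := by
    intro s hs
    have hs0 : (0:ℝ) < s := hs
    rw [Real.log_mul ha0.ne' hs0.ne', mul_comm a s]
    ring
  rw [setIntegral_congr_fun measurableSet_Ioi h2] at h
  rw [integral_add ((sLogMul_int ha0).const_mul a) ((sMul_int ha0).const_mul _)] at h
  rw [integral_const_mul, integral_const_mul, B_eq ha0] at h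
  have ha' : a ≠ 0 := ha0.ne'
  have ha2 : (a:ℝ) ^ 2 ≠ 0 := pow_ne_zero 2 ha'
  have e1 : a * a⁻¹ = 1 := mul_inv_cancel₀ ha'
  have e2 : a ^ 2 * (a ^ 2)⁻¹ = 1 := mul_inv_cancel₀ ha2
  rw [eq_div_iff ha2]
  linear_combination a * h - Real.log a * e2 + (1 - γ) * e1

/-! ### Bounds involving `cosh` -/

lemma cosh_lb (t : ℝ) : (1 + t) / 2 ≤ Real.cosh t := by
  have h := Real.add_one_le_exp t
  have h2 : (0:ℝ) < Real.exp (-t) := Real.exp_pos _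
  rw [Real.cosh_eq]
  linarith

lemma cosh_lb' (t : ℝ) : Real.exp t / 2 ≤ Real.cosh t := by
  have h2 : (0:ℝ) < Real.exp (-t) := Real.exp_pos _
  rw [Real.cosh_eq]
  linarith

lemma exp_cosh_le {s : ℝ} (t : ℝ) (hs : 0 < s) :
    Real.exp (-(s * Real.cosh t)) ≤ Real.exp (-(s/2)) * Real.exp (-(s/2) * t) := by
  rw [← Real.exp_add]
  apply Real.exp_le_exp.mpr
  nlinarith [cosh_lb t, hs.le]

lemma log_cosh_nonneg (t : ℝ) : 0 ≤ Real.log (Real.cosh t) :=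
  Real.log_nonneg (Real.one_le_cosh t)

lemma log_cosh_le {t : ℝ} (ht : 0 ≤ t) : Real.log (Real.cosh t) ≤ t := by
  rw [Real.log_le_iff_le_exp (Real.cosh_pos t)]
  have h2 : Real.exp (-t) ≤ Real.exp t := Real.exp_le_exp.mpr (by linarith)
  rw [Real.cosh_eq]
  linarith

/-! ### Value of `∫₀^∞ e^{-bt} dt` -/

lemma exp_int_val {b : ℝ} (hb : 0 < b) :
    ∫ t in Ioi (0:ℝ), Real.exp (-b * t) = b⁻¹ := by
  have h := integral_comp_mul_left_Ioi (fun u : ℝ => Real.exp (-u)) 0 hb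
  rw [mul_zero, integral_exp_neg_Ioi_zero, smul_eq_mul, mul_one] at h
  rw [← h]
  refine setIntegral_congr_fun measurableSet_Ioi fun t _ => ?_
  rw [neg_mul]

/-! ### Fubini -/

lemma t_int {s : ℝ} (hs : 0 < s) :
    IntegrableOn (fun t : ℝ => Real.exp (-(s * Real.cosh t))) (Ioi 0) := by
  have hmaj : IntegrableOn (fun t : ℝ => Real.exp (-(s/2)) * Real.exp (-(s/2) * t)) (Ioi 0) :=
    (exp_neg_integrableOn_Ioi 0 (by positivity : (0:ℝ) < s/2)).const_mul _
  refine Integrable.mono' hmaj (Measurable.aestronglyMeasurable (by fun_prop)) ?_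
  refine ae_of_all _ fun t => ?_
  rw [Real.norm_eq_abs, abs_of_pos (Real.exp_pos _)]
  exact exp_cosh_le t hs

lemma F_integrable :
    Integrable
      (Function.uncurry fun s t : ℝ => s * Real.log s * Real.exp (-(s * Real.cosh t)))
      ((volume.restrict (Ioi 0)).prod (volume.restrict (Ioi 0))) := by
  have hmeas : AEStronglyMeasurable
      (Function.uncurry fun s t : ℝ => s * Real.log s * Real.exp (-(s * Real.cosh t)))
      ((volume.restrict (Ioi 0)).prod (volume.restrict (Ioi 0))) :=
    Measurable.aestronglyMeasurable (by fun_prop)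
  rw [integrable_prod_iff hmeas]
  constructor
  · rw [ae_restrict_iff' measurableSet_Ioi]
    refine ae_of_all _ fun s hs => ?_
    simp only [Function.uncurry_apply_pair]
    exact (t_int hs).const_mul _
  · -- the function `s ↦ ∫ t, ‖F s t‖` is integrable
    have g1 : IntegrableOn (fun s : ℝ => s * Real.exp (-(s/2))) (Ioi 0) := by
      refine (sMul_int (a := 1/2) (by norm_num)).congr_fun (fun x _ => ?_) measurableSet_Ioi
      ring_nf
    have g2 : IntegrableOn (fun s : ℝ => s ^ (-(1/2) : ℝ) * Real.exp (-(s/2))) (Ioi 0) := by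
      refine (intOn_rpow_exp (q := -(1/2)) (by norm_num)
        (by norm_num : (0:ℝ) < 1/2)).congr_fun (fun x _ => ?_) measurableSet_Ioi
      ring_nf
    have hg : IntegrableOn
        (fun s : ℝ => 2 * (s * Real.exp (-(s/2))) + 4 * (s ^ (-(1/2) : ℝ) * Real.exp (-(s/2))))
        (Ioi 0) := (g1.const_mul 2).add (g2.const_mul 4)
    refine Integrable.mono' hg (hmeas.norm.integral_prod_right') ?_
    rw [ae_restrict_iff' measurableSet_Ioi]
    refine ae_of_all _ fun s hs => ?_
    have hs0 : (0:ℝ) < s := hs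
    have hE : (0:ℝ) < Real.exp (-(s/2)) := Real.exp_pos _
    have hnorm_eq : ∀ t : ℝ,
        ‖Function.uncurry (fun s t : ℝ => s * Real.log s * Real.exp (-(s * Real.cosh t))) (s, t)‖
          = |s * Real.log s| * Real.exp (-(s * Real.cosh t)) := by
      intro t
      rw [Function.uncurry_apply_pair]
      rw [norm_mul, Real.norm_eq_abs, Real.norm_eq_abs, abs_of_pos (Real.exp_pos _)]
    have hval : (∫ t in Ioi (0:ℝ),
        ‖Function.uncurry (fun s t : ℝ => s * Real.log s * Real.exp (-(s * Real.cosh t))) (s, t)‖)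
          = |s * Real.log s| * ∫ t in Ioi (0:ℝ), Real.exp (-(s * Real.cosh t)) := by
      rw [setIntegral_congr_fun measurableSet_Ioi fun t _ => hnorm_eq t, integral_const_mul]
    have hIbound : (∫ t in Ioi (0:ℝ), Real.exp (-(s * Real.cosh t)))
        ≤ Real.exp (-(s/2)) * (s/2)⁻¹ := by
      have hmaj : IntegrableOn (fun t : ℝ => Real.exp (-(s/2)) * Real.exp (-(s/2) * t))
          (Ioi 0) := (exp_neg_integrableOn_Ioi 0 (by positivity : (0:ℝ) < s/2)).const_mul _
      calc (∫ t in Ioi (0:ℝ), Real.exp (-(s * Real.cosh t)))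
          ≤ ∫ t in Ioi (0:ℝ), Real.exp (-(s/2)) * Real.exp (-(s/2) * t) :=
            setIntegral_mono_on (t_int hs0) hmaj measurableSet_Ioi
              fun t _ => exp_cosh_le t hs0
        _ = Real.exp (-(s/2)) * (s/2)⁻¹ := by
            rw [integral_const_mul, exp_int_val (by positivity : (0:ℝ) < s/2)]
    rw [Real.norm_eq_abs, abs_of_nonneg (integral_nonneg fun t => norm_nonneg _), hval]
    have hIn : (0:ℝ) ≤ ∫ t in Ioi (0:ℝ), Real.exp (-(s * Real.cosh t)) :=
      integral_nonneg fun t => (Real.exp_pos _).le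
    calc |s * Real.log s| * ∫ t in Ioi (0:ℝ), Real.exp (-(s * Real.cosh t))
        ≤ |s * Real.log s| * (Real.exp (-(s/2)) * (s/2)⁻¹) :=
          mul_le_mul_of_nonneg_left hIbound (abs_nonneg _)
      _ = 2 * |Real.log s| * Real.exp (-(s/2)) := by
          rw [abs_mul, abs_of_pos hs0]
          field_simp
      _ ≤ 2 * (s + 2 * s ^ (-(1/2) : ℝ)) * Real.exp (-(s/2)) := by
          have := abs_log_le hs0
          have h2 : (0:ℝ) ≤ 2 := by norm_num
          nlinarith [hE.le, abs_nonneg (Real.log s)]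
      _ = 2 * (s * Real.exp (-(s/2))) + 4 * (s ^ (-(1/2) : ℝ) * Real.exp (-(s/2))) := by
          ring

/-! ### The outer integral via an explicit antiderivative -/

lemma H_deriv (x : ℝ) :
    HasDerivAt (fun t => t - Real.sinh t / Real.cosh t * (γ + Real.log (Real.cosh t)))
      ((1 - γ - Real.log (Real.cosh x)) / Real.cosh x ^ 2) x := by
  have hc : Real.cosh x ≠ 0 := (Real.cosh_pos x).ne'
  have hq : HasDerivAt (fun t => Real.sinh t / Real.cosh t)
      ((Real.cosh x * Real.cosh x - Real.sinh x * Real.sinh x) / Real.cosh x ^ 2) x :=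
    (Real.hasDerivAt_sinh x).div (Real.hasDerivAt_cosh x) hc
  have hl : HasDerivAt (fun t => γ + Real.log (Real.cosh t))
      (Real.sinh x / Real.cosh x) x :=
    ((Real.hasDerivAt_cosh x).log hc).const_add γ
  have h := (hasDerivAt_id x).sub (hq.mul hl)
  refine h.congr_deriv ?_
  symm
  have hss : Real.sinh x * Real.sinh x = Real.cosh x * Real.cosh x - 1 := by
    nlinarith [Real.cosh_sq_sub_sinh_sq x]
  rw [div_mul_div_comm, hss]
  field_simp
  ring

lemma outer_int :
    IntegrableOn (fun t : ℝ => (1 - γ - Real.log (Real.cosh t)) / Real.cosh t ^ 2) (Ioi 0) := by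
  have m1 : IntegrableOn (fun t : ℝ => |1 - γ| * (4 * Real.exp (-2 * t))) (Ioi 0) :=
    ((exp_neg_integrableOn_Ioi 0 two_pos).const_mul 4).const_mul _
  have m2 : IntegrableOn (fun t : ℝ => 4 * (t * Real.exp (-2 * t))) (Ioi 0) := by
    refine IntegrableOn.congr_fun ((sMul_int (a := 2) two_pos).const_mul 4)
      (fun x _ => ?_) measurableSet_Ioi
    ring_nf
  refine Integrable.mono' (m1.add m2) (Measurable.aestronglyMeasurable
    (((measurable_const.sub ((Real.measurable_log.comp Real.continuous_cosh.measurable)))).div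
      ((Real.continuous_cosh.measurable).pow_const 2))) ?_
  rw [ae_restrict_iff' measurableSet_Ioi]
  refine ae_of_all _ fun t ht => ?_
  have ht0 : (0:ℝ) < t := ht
  have hc : (0:ℝ) < Real.cosh t := Real.cosh_pos t
  have hc2 : (0:ℝ) < Real.cosh t ^ 2 := by positivity
  rw [Real.norm_eq_abs, abs_div, abs_of_pos hc2, div_le_iff₀ hc2]
  have habs : |1 - γ - Real.log (Real.cosh t)| ≤ |1 - γ| + t := by
    have h1 := log_cosh_nonneg t
    have h2 := log_cosh_le ht0.le
    rw [abs_le]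
    constructor
    · have := neg_abs_le (1 - γ)
      linarith
    · have := le_abs_self (1 - γ)
      linarith
  have hexp1 : Real.exp (-2 * t) * (Real.exp t * Real.exp t) = 1 := by
    rw [← Real.exp_add, ← Real.exp_add, show (-2 * t) + (t + t) = (0:ℝ) by ring, Real.exp_zero]
  have hcl := cosh_lb' t
  have hE : (0:ℝ) < Real.exp t := Real.exp_pos _
  have hE2 : (0:ℝ) < Real.exp (-2 * t) := Real.exp_pos _
  have hc2' : Real.exp t / 2 * (Real.exp t / 2) ≤ Real.cosh t * Real.cosh t :=
    mul_le_mul hcl hcl (by positivity) hc.le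
  have hkey : 1 ≤ 4 * Real.exp (-2 * t) * Real.cosh t ^ 2 := by nlinarith [hc2', hexp1, hE2]
  have habs' : (0:ℝ) ≤ |1 - γ| + t := by positivity
  simp only [Pi.add_apply]
  nlinarith [mul_le_mul habs hkey (by norm_num) habs',
    abs_nonneg (1 - γ - Real.log (Real.cosh t))]

lemma tendsto_exp_neg2 : Tendsto (fun t : ℝ => Real.exp (-(2 * t))) atTop (𝓝 0) := by
  have h1 : Tendsto (fun t : ℝ => 2 * t) atTop atTop :=
    Tendsto.const_mul_atTop two_pos tendsto_id
  exact Real.tendsto_exp_atBot.comp (tendsto_neg_atTop_atBot.comp h1)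

lemma cosh_mul_exp (t : ℝ) :
    Real.cosh t * Real.exp (-t) = (1 + Real.exp (-(2 * t))) / 2 := by
  rw [Real.cosh_eq]
  have h1 : Real.exp t * Real.exp (-t) = 1 := by rw [← Real.exp_add]; simp
  have h2 : Real.exp (-t) * Real.exp (-t) = Real.exp (-(2 * t)) := by
    rw [← Real.exp_add]; ring_nf
  rw [div_mul_eq_mul_div, add_mul, h1, h2]

lemma sinh_mul_exp (t : ℝ) :
    Real.sinh t * Real.exp (-t) = (1 - Real.exp (-(2 * t))) / 2 := by
  rw [Real.sinh_eq]
  have h1 : Real.exp t * Real.exp (-t) = 1 := by rw [← Real.exp_add]; simp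
  have h2 : Real.exp (-t) * Real.exp (-t) = Real.exp (-(2 * t)) := by
    rw [← Real.exp_add]; ring_nf
  rw [div_mul_eq_mul_div, sub_mul, h1, h2]

lemma tendsto_coshexp :
    Tendsto (fun t : ℝ => Real.cosh t * Real.exp (-t)) atTop (𝓝 (1/2)) := by
  have h : Tendsto (fun t : ℝ => (1 + Real.exp (-(2 * t))) / 2) atTop (𝓝 ((1 + 0) / 2)) :=
    (tendsto_const_nhds.add tendsto_exp_neg2).div_const 2
  rw [show ((1:ℝ) + 0) / 2 = 1/2 by norm_num] at h
  exact h.congr fun t => (cosh_mul_exp t).symm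

lemma tendsto_sinhexp :
    Tendsto (fun t : ℝ => Real.sinh t * Real.exp (-t)) atTop (𝓝 (1/2)) := by
  have h : Tendsto (fun t : ℝ => (1 - Real.exp (-(2 * t))) / 2) atTop (𝓝 ((1 - 0) / 2)) :=
    (tendsto_const_nhds.sub tendsto_exp_neg2).div_const 2
  rw [show ((1:ℝ) - 0) / 2 = 1/2 by norm_num] at h
  exact h.congr fun t => (sinh_mul_exp t).symm

lemma tendsto_a : Tendsto (fun t : ℝ => t - Real.log (Real.cosh t)) atTop (𝓝 (Real.log 2)) := by
  have h := ((Real.continuousAt_log (by norm_num : (1/2:ℝ) ≠ 0)).tendsto).comp tendsto_coshexp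
  have h2 : Tendsto (fun t : ℝ => -Real.log (Real.cosh t * Real.exp (-t))) atTop
      (𝓝 (-Real.log (1/2))) := h.neg
  rw [show -Real.log (1/2) = Real.log 2 by
    rw [one_div, Real.log_inv]; ring] at h2
  refine h2.congr fun t => ?_
  rw [Real.log_mul (Real.cosh_pos t).ne' (Real.exp_ne_zero _), Real.log_exp]
  ring

lemma tendsto_tanh : Tendsto (fun t : ℝ => Real.sinh t / Real.cosh t) atTop (𝓝 1) := by
  have h := tendsto_sinhexp.div tendsto_coshexp (by norm_num : (1/2:ℝ) ≠ 0)
  rw [show ((1:ℝ)/2) / (1/2) = 1 by norm_num] at h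
  refine h.congr fun t => ?_
  simp only [Pi.div_apply]
  rw [mul_div_mul_right _ _ (Real.exp_ne_zero (-t))]

lemma tendsto_c :
    Tendsto (fun t : ℝ => (1 - Real.sinh t / Real.cosh t) * Real.log (Real.cosh t))
      atTop (𝓝 0) := by
  have hupper : Tendsto (fun t : ℝ => 2 * (t ^ (1:ℝ) * Real.exp (-2 * t))) atTop (𝓝 (2 * 0)) :=
    (tendsto_rpow_mul_exp_neg_mul_atTop_nhds_zero 1 2 two_pos).const_mul 2
  rw [mul_zero] at hupper
  refine tendsto_of_tendsto_of_tendsto_of_le_of_le' tendsto_const_nhds hupper ?_ ?_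
  · filter_upwards [eventually_ge_atTop (0:ℝ)] with t ht
    have h1 : Real.sinh t / Real.cosh t ≤ 1 :=
      (div_le_one (Real.cosh_pos t)).mpr (Real.sinh_lt_cosh t).le
    have h2 := log_cosh_nonneg t
    exact mul_nonneg (by linarith) h2
  · filter_upwards [eventually_ge_atTop (0:ℝ)] with t ht
    have hc : (0:ℝ) < Real.cosh t := Real.cosh_pos t
    have hcs : Real.cosh t - Real.sinh t = Real.exp (-t) := by
      rw [Real.cosh_eq, Real.sinh_eq]; ring
    have h1 : 1 - Real.sinh t / Real.cosh t = Real.exp (-t) / Real.cosh t := by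
      rw [eq_div_iff hc.ne', sub_mul, div_mul_cancel₀ _ hc.ne']
      linarith
    have h2 : Real.exp (-t) / Real.cosh t ≤ 2 * Real.exp (-2 * t) := by
      rw [div_le_iff₀ hc]
      have hexp1 : Real.exp (-2 * t) * Real.exp t = Real.exp (-t) := by
        rw [← Real.exp_add]; ring_nf
      nlinarith [cosh_lb' t, Real.exp_pos t, Real.exp_pos (-2 * t)]
    have h3 := log_cosh_le ht
    have h4 := log_cosh_nonneg t
    calc (1 - Real.sinh t / Real.cosh t) * Real.log (Real.cosh t)
        ≤ (2 * Real.exp (-2 * t)) * t := by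
          rw [h1]
          exact mul_le_mul h2 h3 h4 (by positivity)
      _ = 2 * (t ^ (1:ℝ) * Real.exp (-2 * t)) := by rw [Real.rpow_one]; ring

lemma tendsto_H :
    Tendsto (fun t : ℝ => t - Real.sinh t / Real.cosh t * (γ + Real.log (Real.cosh t)))
      atTop (𝓝 (Real.log 2 - γ)) := by
  have total : Tendsto (fun t : ℝ =>
      ((t - Real.log (Real.cosh t)) - γ * (Real.sinh t / Real.cosh t))
        + (1 - Real.sinh t / Real.cosh t) * Real.log (Real.cosh t))
      atTop (𝓝 ((Real.log 2 - γ * 1) + 0)) :=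
    (tendsto_a.sub (tendsto_tanh.const_mul γ)).add tendsto_c
  rw [show (Real.log 2 - γ * 1) + 0 = Real.log 2 - γ by ring] at total
  exact total.congr fun t => by ring

lemma outer_eq :
    ∫ t in Ioi (0:ℝ), (1 - γ - Real.log (Real.cosh t)) / Real.cosh t ^ 2
      = Real.log 2 - γ := by
  have h := integral_Ioi_of_hasDerivAt_of_tendsto'
    (f := fun t => t - Real.sinh t / Real.cosh t * (γ + Real.log (Real.cosh t)))
    (f' := fun t => (1 - γ - Real.log (Real.cosh t)) / Real.cosh t ^ 2)
    (a := 0) (fun x _ => H_deriv x) outer_int tendsto_H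
  rw [h]
  simp [Real.sinh_zero, Real.cosh_zero]

end K0Aux

theorem integral_mul_log_mul_besselK0 :
    ∫ s in Set.Ioi (0 : ℝ), s * Real.log s * K0 s
      = Real.log 2 - Real.eulerMascheroniConstant := by
  have h1 : ∀ s ∈ Ioi (0:ℝ), s * Real.log s * K0 s
      = ∫ t in Ioi (0:ℝ), s * Real.log s * Real.exp (-(s * Real.cosh t)) := by
    intro s _
    rw [integral_const_mul]
    simp only [K0, neg_mul]
  rw [setIntegral_congr_fun measurableSet_Ioi h1]
  rw [integral_integral_swap K0Aux.F_integrable]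
  have h2 : ∀ t ∈ Ioi (0:ℝ),
      (∫ s in Ioi (0:ℝ), s * Real.log s * Real.exp (-(s * Real.cosh t)))
        = (1 - Real.eulerMascheroniConstant - Real.log (Real.cosh t)) / Real.cosh t ^ 2 :=
    fun t _ => K0Aux.inner_eq (Real.one_le_cosh t)
  rw [setIntegral_congr_fun measurableSet_Ioi h2]
  exact K0Aux.outer_eq
end

section
/- For every r > 0, the integral ∫ᵣ^∞ s·ln(s/r)·K₀(s) ds equals K₀(r). -/
open MeasureTheory Real Set Filter Topology

noncomputable def gg (k : ℕ) (s : ℝ) : ℝ :=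
  ∫ t in Set.Ioi (0:ℝ), Real.cosh t ^ k * Real.exp (-s * Real.cosh t)

lemma cosh_ge_half_add (t : ℝ) (ht : 0 ≤ t) : (1 + t)/2 ≤ Real.cosh t := by
  have h1 : t + 1 ≤ Real.exp t := Real.add_one_le_exp t
  have h2 : 0 < Real.exp (-t) := Real.exp_pos _
  rw [Real.cosh_eq]
  linarith

lemma pow_le_exp_aux (k : ℕ) {c x : ℝ} (hc : 0 < c) (hx : 0 ≤ x) :
    x ^ k ≤ (k.factorial / c ^ k) * Real.exp (c * x) := by
  have h := Real.pow_div_factorial_le_exp (c*x) (mul_nonneg hc.le hx) k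
  have hck : (0:ℝ) < c ^ k := pow_pos hc k
  have hfk : (0:ℝ) < (k.factorial : ℝ) := by positivity
  rw [mul_pow, div_le_iff₀ hfk] at h
  rw [div_mul_eq_mul_div, le_div_iff₀ hck]
  nlinarith [h]

lemma bound_le (k : ℕ) {s : ℝ} (hs : 0 < s) {t : ℝ} (ht : 0 ≤ t) :
    Real.cosh t ^ k * Real.exp (-s * Real.cosh t)
      ≤ (k.factorial / (s/2) ^ k) * Real.exp (-(s/4)) * Real.exp (-(s/4) * t) := by
  have hc : 0 ≤ Real.cosh t := (Real.cosh_pos t).le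
  have h1 : Real.cosh t ^ k ≤ (k.factorial / (s/2) ^ k) * Real.exp ((s/2) * Real.cosh t) :=
    pow_le_exp_aux k (by linarith) hc
  have h2 : (1 + t)/2 ≤ Real.cosh t := cosh_ge_half_add t ht
  have key : -s * Real.cosh t = (s/2) * Real.cosh t + (-s * Real.cosh t - (s/2) * Real.cosh t) := by ring
  have h3 : Real.exp (-s * Real.cosh t - (s/2)*Real.cosh t + (s/2)*Real.cosh t)
      = Real.exp (-s*Real.cosh t) := by ring_nf
  calc Real.cosh t ^ k * Real.exp (-s * Real.cosh t)
      ≤ ((k.factorial / (s/2) ^ k) * Real.exp ((s/2) * Real.cosh t)) * Real.exp (-s * Real.cosh t) := by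
        apply mul_le_mul_of_nonneg_right h1 (Real.exp_pos _).le
    _ = (k.factorial / (s/2) ^ k) * Real.exp (-(s/2) * Real.cosh t) := by
        rw [mul_assoc, ← Real.exp_add]; ring_nf
    _ ≤ (k.factorial / (s/2) ^ k) * Real.exp (-(s/2) * ((1+t)/2)) := by
        apply mul_le_mul_of_nonneg_left _ (by positivity)
        apply Real.exp_le_exp.2
        nlinarith
    _ = (k.factorial / (s/2) ^ k) * Real.exp (-(s/4)) * Real.exp (-(s/4) * t) := by
        rw [mul_assoc, ← Real.exp_add]; ring_nf

lemma integrable_gg (k : ℕ) {s : ℝ} (hs : 0 < s) :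
    IntegrableOn (fun t => Real.cosh t ^ k * Real.exp (-s * Real.cosh t)) (Set.Ioi 0) := by
  have hcont : Continuous fun t => Real.cosh t ^ k * Real.exp (-s * Real.cosh t) := by
    continuity
  apply Integrable.mono' (g := fun t => (k.factorial / (s/2) ^ k) * Real.exp (-(s/4))
      * Real.exp (-(s/4) * t))
  · exact (((exp_neg_integrableOn_Ioi 0 (by positivity : (0:ℝ) < s/4))).const_mul _)
  · exact hcont.aestronglyMeasurable
  · filter_upwards [ae_restrict_mem measurableSet_Ioi] with t ht
    rw [Real.norm_eq_abs, abs_of_nonneg (by positivity)]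
    exact bound_le k hs (le_of_lt ht)

lemma gg_nonneg (k : ℕ) (s : ℝ) : 0 ≤ gg k s :=
  integral_nonneg fun t => by positivity

lemma hasDerivAt_gg (k : ℕ) {s : ℝ} (hs : 0 < s) :
    HasDerivAt (gg k) (-(gg (k+1) s)) s := by
  have hε : 0 < s/2 := by linarith
  have key := hasDerivAt_integral_of_dominated_loc_of_deriv_le (μ := volume.restrict (Set.Ioi 0))
    (F := fun x t => Real.cosh t ^ k * Real.exp (-x * Real.cosh t))
    (F' := fun x t => -(Real.cosh t ^ (k+1) * Real.exp (-x * Real.cosh t)))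
    (x₀ := s) (s := Metric.ball s (s/2))
    (bound := fun t => Real.cosh t ^ (k+1) * Real.exp (-(s/2) * Real.cosh t))
    (Metric.ball_mem_nhds s hε) ?_ ?_ ?_ ?_ ?_ ?_
  · have h2 := key.2
    have heq : (∫ t in Set.Ioi (0:ℝ), -(Real.cosh t ^ (k+1) * Real.exp (-s * Real.cosh t)))
        = -(gg (k+1) s) := by
      rw [integral_neg]; rfl
    rw [heq] at h2
    exact h2
  · exact Filter.Eventually.of_forall fun x =>
      (by continuity : Continuous fun t => Real.cosh t ^ k * Real.exp (-x * Real.cosh t)).aestronglyMeasurable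
  · exact integrable_gg k hs
  · exact ((by continuity : Continuous fun t =>
      -(Real.cosh t ^ (k+1) * Real.exp (-s * Real.cosh t)))).aestronglyMeasurable
  · refine Filter.Eventually.of_forall fun t => fun x hx => ?_
    have hx2 : s/2 ≤ x := by
      rw [Metric.mem_ball, Real.dist_eq, abs_lt] at hx; linarith
    have hc := Real.cosh_pos t
    rw [Real.norm_eq_abs, abs_neg, abs_of_nonneg (by positivity)]
    apply mul_le_mul_of_nonneg_left _ (by positivity)
    apply Real.exp_le_exp.2
    nlinarith
  · exact integrable_gg (k+1) hε
  · refine Filter.Eventually.of_forall fun t => fun x hx => ?_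
    have h1 : HasDerivAt (fun y : ℝ => -y * Real.cosh t) (-Real.cosh t) x := by
      simpa using ((hasDerivAt_id x).neg.mul_const (Real.cosh t))
    have h2 := (h1.exp).const_mul (Real.cosh t ^ k)
    refine h2.congr_deriv ?_
    show _ = -(Real.cosh t ^ (k+1) * Real.exp (-x * Real.cosh t))
    rw [pow_succ]; ring

lemma gg_decay (k : ℕ) {s : ℝ} (hs : 1 ≤ s) : gg k s ≤ Real.exp (-(s-1)) * gg k 1 := by
  unfold gg
  rw [← integral_const_mul]
  apply setIntegral_mono_on (integrable_gg k (by linarith)) ((integrable_gg k one_pos).const_mul _)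
    measurableSet_Ioi
  intro t _
  have hc := Real.one_le_cosh t
  calc Real.cosh t ^ k * Real.exp (-s * Real.cosh t)
      = Real.cosh t ^ k * (Real.exp (-(s-1) * Real.cosh t) * Real.exp (-1 * Real.cosh t)) := by
        rw [← Real.exp_add]; ring_nf
    _ ≤ Real.cosh t ^ k * (Real.exp (-(s-1)) * Real.exp (-1 * Real.cosh t)) := by
        apply mul_le_mul_of_nonneg_left _ (by positivity)
        apply mul_le_mul_of_nonneg_right _ (Real.exp_pos _).le
        apply Real.exp_le_exp.2
        nlinarith
    _ = Real.exp (-(s-1)) * (Real.cosh t ^ k * Real.exp (-1 * Real.cosh t)) := by ring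

lemma gg_ode {s : ℝ} (hs : 0 < s) : s * gg 2 s - gg 1 s = s * gg 0 s := by
  set f : ℝ → ℝ := fun t => Real.sinh t * Real.exp (-s * Real.cosh t) with hf
  set f' : ℝ → ℝ := fun t => Real.cosh t * Real.exp (-s * Real.cosh t)
      - s * (Real.sinh t ^ 2 * Real.exp (-s * Real.cosh t)) with hf'
  have hderiv : ∀ t ∈ Set.Ioi (0:ℝ), HasDerivAt f (f' t) t := by
    intro t _
    have h1 : HasDerivAt (fun t : ℝ => -s * Real.cosh t) (-s * Real.sinh t) t :=
      (Real.hasDerivAt_cosh t).const_mul (-s)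
    have h3 := (Real.hasDerivAt_sinh t).mul h1.exp
    refine h3.congr_deriv ?_
    simp only [hf']
    ring
  have hint : IntegrableOn f' (Set.Ioi 0) := by
    apply Integrable.mono' (g := fun t =>
        (1 + s) * (Real.cosh t ^ 2 * Real.exp (-s * Real.cosh t)))
    · exact (integrable_gg 2 hs).const_mul _
    · exact (by continuity : Continuous f').aestronglyMeasurable
    · refine Filter.Eventually.of_forall fun t => ?_
      have hc := Real.one_le_cosh t
      have hsq : Real.sinh t ^ 2 = Real.cosh t ^ 2 - 1 := Real.sinh_sq t
      have he := Real.exp_pos (-s * Real.cosh t)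
      have h1 : Real.cosh t * Real.exp (-s * Real.cosh t)
          ≤ Real.cosh t ^ 2 * Real.exp (-s * Real.cosh t) := by
        nlinarith [mul_nonneg (mul_nonneg (sub_nonneg.2 hc) (Real.cosh_pos t).le) he.le]
      have h2 : Real.exp (-s * Real.cosh t) ≤ Real.cosh t ^ 2 * Real.exp (-s * Real.cosh t) := by
        nlinarith [mul_nonneg (mul_nonneg (sub_nonneg.2 hc)
          (by linarith : (0:ℝ) ≤ Real.cosh t + 1)) he.le]
      have h3 : 0 ≤ s * Real.exp (-s * Real.cosh t) := by positivity
      have h4 : s * Real.exp (-s * Real.cosh t) ≤ s * (Real.cosh t ^ 2 * Real.exp (-s * Real.cosh t)) :=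
        mul_le_mul_of_nonneg_left h2 hs.le
      have h5 : 0 ≤ Real.cosh t * Real.exp (-s * Real.cosh t) := by positivity
      have h6 : 0 ≤ Real.cosh t ^ 2 * Real.exp (-s * Real.cosh t) := by positivity
      rw [Real.norm_eq_abs, abs_le]
      constructor <;> simp only [hf', hsq] <;> nlinarith
  have htend : Tendsto f atTop (𝓝 0) := by
    apply squeeze_zero_norm' (a := fun t =>
        ((Nat.factorial 1 / (s/2) ^ 1) * Real.exp (-(s/4))) * Real.exp (-(s/4) * t))
    · filter_upwards [eventually_ge_atTop (0:ℝ)] with t ht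
      have hb := bound_le 1 hs ht
      have habs : |Real.sinh t| ≤ Real.cosh t := by
        rw [abs_le]; constructor <;> nlinarith [Real.cosh_sq t, Real.sinh_sq t,
          Real.cosh_pos t, sq_nonneg (Real.sinh t + Real.cosh t), sq_nonneg (Real.sinh t - Real.cosh t)]
      rw [Real.norm_eq_abs, hf, abs_mul, abs_of_nonneg (Real.exp_pos _).le]
      calc |Real.sinh t| * Real.exp (-s * Real.cosh t)
          ≤ Real.cosh t * Real.exp (-s * Real.cosh t) := by
            apply mul_le_mul_of_nonneg_right habs (Real.exp_pos _).le
        _ = Real.cosh t ^ 1 * Real.exp (-s * Real.cosh t) := by ring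
        _ ≤ _ := hb
    · have h1 : Tendsto (fun t : ℝ => (s/4) * t) atTop atTop :=
        Tendsto.const_mul_atTop (by linarith) tendsto_id
      have h2 : Tendsto (fun t : ℝ => Real.exp (-((s/4) * t))) atTop (𝓝 0) :=
        Real.tendsto_exp_neg_atTop_nhds_zero.comp h1
      have h3 := h2.const_mul ((Nat.factorial 1 / (s/2) ^ 1) * Real.exp (-(s/4)))
      simpa [neg_mul] using h3
  have hcont : ContinuousWithinAt f (Set.Ici 0) 0 :=
    (by continuity : Continuous f).continuousWithinAt
  have key := integral_Ioi_of_hasDerivAt_of_tendsto hcont hderiv hint htend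
  have hf0 : f 0 = 0 := by simp [hf]
  rw [hf0, sub_zero] at key
  have hsplit : ∫ t in Set.Ioi (0:ℝ), f' t
      = gg 1 s - (s * gg 2 s - s * gg 0 s) := by
    have e0 := integrable_gg 0 hs
    have e1 := integrable_gg 1 hs
    have e2 := integrable_gg 2 hs
    have hfe : ∀ t : ℝ, f' t = Real.cosh t ^ 1 * Real.exp (-s * Real.cosh t)
        - (s * (Real.cosh t ^ 2 * Real.exp (-s * Real.cosh t))
          - s * (Real.cosh t ^ 0 * Real.exp (-s * Real.cosh t))) := by
      intro t
      simp only [hf', Real.sinh_sq]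
      ring
    rw [show (∫ t in Set.Ioi (0:ℝ), f' t) = ∫ t in Set.Ioi (0:ℝ),
        ((Real.cosh t ^ 1 * Real.exp (-s * Real.cosh t))
        - ((s * (Real.cosh t ^ 2 * Real.exp (-s * Real.cosh t)))
          - (s * (Real.cosh t ^ 0 * Real.exp (-s * Real.cosh t))))) from
      integral_congr_ae (Filter.Eventually.of_forall fun t => hfe t)]
    have e20 : IntegrableOn (fun t => s * (Real.cosh t ^ 2 * Real.exp (-s * Real.cosh t))
        - s * (Real.cosh t ^ 0 * Real.exp (-s * Real.cosh t))) (Set.Ioi 0) :=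
      (e2.const_mul s).sub (e0.const_mul s)
    rw [integral_sub e1 e20, integral_sub (e2.const_mul s) (e0.const_mul s),
      integral_const_mul, integral_const_mul]
    rfl
  rw [hsplit] at key
  linarith

theorem integral_mul_log_div_mul_besselK0_on_Ioi (r : ℝ) (hr : 0 < r) :
    ∫ s in Set.Ioi r, s * Real.log (s / r) * K0 s = K0 r := by
  have hK0g : ∀ x, K0 x = gg 0 x := fun x => by simp [K0, gg]
  set F : ℝ → ℝ := fun x => -(Real.log (x/r) * (x * gg 1 x)) - gg 0 x with hFdef
  have hFd : ∀ x, 0 < x → HasDerivAt F (Real.log (x/r) * (x * gg 2 x - gg 1 x)) x := by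
    intro x hx0
    have hlog : HasDerivAt (fun y : ℝ => Real.log (y/r)) x⁻¹ x := by
      have h := (Real.hasDerivAt_log hx0.ne').sub_const (Real.log r)
      apply h.congr_of_eventuallyEq
      filter_upwards [eventually_gt_nhds hx0] with y hy
      rw [Real.log_div hy.ne' hr.ne']
    have hB := (hasDerivAt_id x).mul (hasDerivAt_gg 1 hx0)
    have hA := hlog.mul hB
    have hD := (hA.neg).sub (hasDerivAt_gg 0 hx0)
    refine hD.congr_deriv ?_
    have hinv : x⁻¹ * (x * gg 1 x) = gg 1 x := by field_simp
    simp only [Pi.mul_apply, id_eq, one_mul, show (1+1 : ℕ) = 2 from rfl, show (0+1 : ℕ) = 1 from rfl]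
    rw [hinv]
    ring
  have hderiv : ∀ x ∈ Set.Ioi r, HasDerivAt F (x * Real.log (x/r) * K0 x) x := by
    intro x hx
    have hx0 : 0 < x := hr.trans hx
    have h := hFd x hx0
    rw [gg_ode hx0] at h
    convert h using 1
    rw [hK0g]
    ring
  have hpos : ∀ x ∈ Set.Ioi r, 0 ≤ x * Real.log (x/r) * K0 x := by
    intro x hx
    have hx0 : 0 < x := hr.trans hx
    have hlog : 0 ≤ Real.log (x/r) := Real.log_nonneg ((one_le_div hr).2 (le_of_lt hx))
    have hK : 0 ≤ K0 x := by
      rw [hK0g]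
      exact integral_nonneg fun t => by positivity
    exact mul_nonneg (mul_nonneg hx0.le hlog) hK
  have hcont : ContinuousWithinAt F (Set.Ici r) r :=
    (hFd r hr).continuousAt.continuousWithinAt
  have htend : Tendsto F atTop (𝓝 0) := by
    apply squeeze_zero_norm' (a := fun x =>
      (Real.exp 1 * gg 1 1 / r) * (x^2 * Real.exp (-x)) + (Real.exp 1 * gg 0 1) * Real.exp (-x))
    · filter_upwards [eventually_ge_atTop (max r 1)] with x hx
      have hxr : r ≤ x := le_trans (le_max_left _ _) hx
      have hx1 : 1 ≤ x := le_trans (le_max_right _ _) hx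
      have hx0 : 0 < x := lt_of_lt_of_le one_pos hx1
      have l1 : 0 ≤ Real.log (x/r) := Real.log_nonneg ((one_le_div hr).2 hxr)
      have b1 : Real.log (x/r) ≤ x/r := by
        have := Real.log_le_sub_one_of_pos (by positivity : 0 < x/r)
        linarith
      have b2 : gg 1 x ≤ Real.exp (-(x-1)) * gg 1 1 := gg_decay 1 hx1
      have b3 : gg 0 x ≤ Real.exp (-(x-1)) * gg 0 1 := gg_decay 0 hx1
      have g1n : 0 ≤ gg 1 x := gg_nonneg 1 x
      have g0n : 0 ≤ gg 0 x := gg_nonneg 0 x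
      have hexp : Real.exp (-(x-1)) = Real.exp 1 * Real.exp (-x) := by
        rw [← Real.exp_add]; ring_nf
      have habs : ‖F x‖ = Real.log (x/r) * (x * gg 1 x) + gg 0 x := by
        rw [Real.norm_eq_abs, hFdef]
        rw [abs_of_nonpos (by nlinarith [mul_nonneg (mul_nonneg l1 hx0.le) g1n])]
        ring
      rw [habs]
      have t1 : Real.log (x/r) * (x * gg 1 x) ≤ (x/r) * (x * (Real.exp (-(x-1)) * gg 1 1)) := by
        apply mul_le_mul b1 _ (mul_nonneg hx0.le g1n) (by positivity)
        exact mul_le_mul_of_nonneg_left b2 hx0.le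
      have t2 : (x/r) * (x * (Real.exp (-(x-1)) * gg 1 1))
          = (Real.exp 1 * gg 1 1 / r) * (x^2 * Real.exp (-x)) := by
        rw [hexp]; ring
      have t3 : gg 0 x ≤ (Real.exp 1 * gg 0 1) * Real.exp (-x) := by
        calc gg 0 x ≤ Real.exp (-(x-1)) * gg 0 1 := b3
          _ = (Real.exp 1 * gg 0 1) * Real.exp (-x) := by rw [hexp]; ring
      linarith [t1, t2 ▸ t1]
    · have h1 := (tendsto_pow_mul_exp_neg_atTop_nhds_zero 2).const_mul
        (Real.exp 1 * gg 1 1 / r)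
      have h2 := Real.tendsto_exp_neg_atTop_nhds_zero.const_mul (Real.exp 1 * gg 0 1)
      simpa using h1.add h2
  have key := integral_Ioi_of_hasDerivAt_of_nonneg hcont hderiv hpos htend
  rw [key, hFdef]
  simp [div_self hr.ne', hK0g r]
end
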